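/- Fix a rooted spanning tree T of weighted graph G and let P' = (p_1,…,p_k), ordered root-wards, be edges on one path of T all of which are descendants of all edges of Q' = (q_1,…,q_ℓ), ordered root-wards, on another path of T. Define M[i,j] = weight of the cut determined by {p_i, q_j} (where p_i is a descendant of q_j). Then M[i,j] + M[i+1,j+1] ≥ M[i,j+1] + M[i+1,j] for all valid i,j. -/

import Mathlib

/-!
Write `A := Q j \ P i` and `B := Q (j+1) \ P (i+1)`. Because `P i ⊆ P (i+1) ⊆ Q j ⊆ Q (j+1)`,
the two sets on the left are `A ∪ B = Q (j+1) \ P i` and `A ∩ B = Q j \ P (i+1)`, so the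
inequality is submodularity of the cut function. That holds for any nonnegative weights:
splitting `A ∪ B` into `A ∩ B`, `A \ B`, `B \ A`, the two sides differ exactly by the weight
of the edges between the two middle pieces `A \ B` and `B \ A`.
-/

open Finset

/-- Total weight of graph edges with one endpoint in `A` and the other in `B`
(summed over ordered pairs). -/
def betw {V : Type*} [Fintype V] (w : V → V → ℝ) (A B : Finset V) : ℝ :=
  ∑ u ∈ A, ∑ v ∈ B, w u v

/-- Weight of the cut `(S, V \\ S)`: total weight of edges leaving `S`. -/
def cutw {V : Type*} [Fintype V] [DecidableEq V] (w : V → V → ℝ) (S : Finset V) : ℝ :=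
  betw w S Sᶜ

section Cut

variable {V : Type*} [Fintype V] (w : V → V → ℝ)

theorem betw_nonneg (hnn : ∀ u v, 0 ≤ w u v) (A B : Finset V) : 0 ≤ betw w A B :=
  sum_nonneg fun u _ => sum_nonneg fun v _ => hnn u v

variable [DecidableEq V]

theorem betw_union_left {A B : Finset V} (h : Disjoint A B) (C : Finset V) :
    betw w (A ∪ B) C = betw w A C + betw w B C := by
  simp only [betw, sum_union h]

theorem betw_union_right {A B : Finset V} (h : Disjoint A B) (C : Finset V) :
    betw w C (A ∪ B) = betw w C A + betw w C B := by
  simp only [betw, sum_union h, sum_add_distrib]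

theorem cutw_eq_betw_univ_sub (S : Finset V) : cutw w S = betw w S univ - betw w S S := by
  have h := betw_union_right w (disjoint_compl_right : Disjoint S Sᶜ) S
  rw [union_compl] at h
  rw [cutw, h]
  ring

theorem cutw_union_union_add_cutw_le (hnn : ∀ u v, 0 ≤ w u v) {X Y Z : Finset V}
    (hXY : Disjoint X Y) (hXZ : Disjoint X Z) (hYZ : Disjoint Y Z) :
    cutw w (X ∪ Y ∪ Z) + cutw w X ≤ cutw w (X ∪ Y) + cutw w (X ∪ Z) := by
  have hXYZ : Disjoint (X ∪ Y) Z := disjoint_union_left.2 ⟨hXZ, hYZ⟩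
  have hYZ_nonneg := betw_nonneg w hnn Y Z
  have hZY_nonneg := betw_nonneg w hnn Z Y
  simp only [cutw_eq_betw_univ_sub, betw_union_left w hXYZ, betw_union_left w hXY,
    betw_union_left w hXZ, betw_union_right w hXYZ, betw_union_right w hXY,
    betw_union_right w hXZ]
  linarith

theorem cutw_union_add_cutw_inter_le (hnn : ∀ u v, 0 ≤ w u v) (A B : Finset V) :
    cutw w (A ∪ B) + cutw w (A ∩ B) ≤ cutw w A + cutw w B := by
  have hA : A ∩ B ∪ A \ B = A := by rw [union_comm, sdiff_union_inter]
  have hB : A ∩ B ∪ B \ A = B := by rw [inter_comm, union_comm, sdiff_union_inter]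
  have hAB : A ∩ B ∪ A \ B ∪ B \ A = A ∪ B := by rw [hA, union_sdiff_self_eq_union]
  have h := cutw_union_union_add_cutw_le w hnn (disjoint_sdiff_inter A B).symm
    (by rw [inter_comm]; exact (disjoint_sdiff_inter B A).symm) disjoint_sdiff_sdiff
  rwa [hAB, hA, hB] at h

end Cut

/-- `P i` and `Q j` are the vertex sets of the subtrees below `p_i` and `q_j`, so `Q j \ P i` is
one side of the cut determined by `{p_i, q_j}`. -/
theorem stmt_8_general {V : Type*} [Fintype V] [DecidableEq V] (w : V → V → ℝ)
    (hnn : ∀ u v, 0 ≤ w u v)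
    (P Q : ℕ → Finset V) (hP : Monotone P) (hQ : Monotone Q)
    (hPQ : ∀ i j, P i ⊆ Q j) :
    ∀ i j, cutw w (Q (j+1) \ P i) + cutw w (Q j \ P (i+1)) ≤
      cutw w (Q j \ P i) + cutw w (Q (j+1) \ P (i+1)) := by
  intro i j
  have hPi : P i ⊆ P (i+1) := hP (Nat.le_succ i)
  have hQj : Q j ⊆ Q (j+1) := hQ (Nat.le_succ j)
  have hPQij := hPQ (i+1) j
  have h_union : Q j \ P i ∪ Q (j+1) \ P (i+1) = Q (j+1) \ P i := by
    ext x; grind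
  have h_inter : Q j \ P i ∩ (Q (j+1) \ P (i+1)) = Q j \ P (i+1) := by
    ext x; grind
  have h := cutw_union_add_cutw_inter_le w hnn (Q j \ P i) (Q (j+1) \ P (i+1))
  rwa [h_union, h_inter] at h

/-- Monge condition, descendant case. `P i` is the subtree below the `i`-th
edge of `P'` and `Q j` the subtree below the `j`-th edge of `Q'`, both ordered
root-wards (so both families increase), with every edge of `P'` a descendant of
every edge of `Q'` (so `P i ⊆ Q j`). With `M i j := cutw (Q j \ P i)` the weight
of the cut determined by the pair, `M[i,j] + M[i+1,j+1] ≥ M[i,j+1] + M[i+1,j]`. -/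
theorem stmt_8 {V : Type*} [Fintype V] [DecidableEq V] (w : V → V → ℝ)
    (hsym : ∀ u v, w u v = w v u) (hnn : ∀ u v, 0 ≤ w u v)
    (P Q : ℕ → Finset V) (hP : Monotone P) (hQ : Monotone Q)
    (hPQ : ∀ i j, P i ⊆ Q j) :
    ∀ i j, cutw w (Q (j+1) \ P i) + cutw w (Q j \ P (i+1)) ≤
      cutw w (Q j \ P i) + cutw w (Q (j+1) \ P (i+1)) :=
  stmt_8_general w hnn P Q hP hQ hPQ
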